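/- arXiv:1602.03155 — 4 statements merged into one kernel-verified Lean document; each statement's English description precedes it below -/
import Mathlib

section
/- Lemma 3.4. Let Ω be an open subset of ℝ^d, d ≥ 1, let E ⊆ Ω be a Lebesgue measurable set of positive Lebesgue measure, and let E⁰ ⊆ E denote the set of points of positive Lebesgue density in E, i.e. the set of x ∈ E such that the Lebesgue measure of E ∩ V is positive for every neighborhood V of x. Then: (a) every smooth real-valued function f ∈ C^∞(Ω) which vanishes on E⁰ is flat at E⁰, i.e. ∂^α f(x) = 0 for every multi-index α ∈ ℕ^d and every x ∈ E⁰; (b) the Lebesgue measure of E ∖ E⁰ is zero. -/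
/-!
At a Lebesgue density point `x` of a set `s`, every ball `B(x + r v, δ r)` meets `s` for small
`r`, so the tangent cone of `s` at `x` is the whole space and derivatives within `s` at `x` are
unique: a function vanishing on `s` has zero derivative there. By the Besicovitch density theorem
almost every point of `s` is a density point, so when `s` has positive measure near each of its
points these are dense in `s`, and continuity of the derivative makes it vanish on all of `s`.
Iterating gives flatness. The set `E⁰` is exactly the everywhere positive part of `E`, which by
inner regularity of Lebesgue measure differs from `E` by a null set and is itself everywhere
positive.
-/

open MeasureTheory Set

noncomputable section

/-- The set of points of positive Lebesgue density of `E` : the points `x ∈ E` such that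
every neighbourhood of `x` meets `E` in a set of positive Lebesgue measure. -/
def posDensity {d : ℕ} (E : Set (Fin d → ℝ)) : Set (Fin d → ℝ) :=
  {x ∈ E | ∀ V ∈ nhds x, 0 < volume (E ∩ V)}

open Metric Filter Topology
open scoped ContDiff

theorem MeasureTheory.Measure.IsEverywherePos.subset_closure_of_measure_diff_eq_zero
    {α : Type*} [TopologicalSpace α] [MeasurableSpace α] {μ : Measure α} {s t : Set α}
    (hs : μ.IsEverywherePos s) (hst : μ (s \ t) = 0) : s ⊆ closure t := by
  intro x hx
  refine mem_closure_iff_nhds.2 fun V hV => not_disjoint_iff_nonempty_inter.1 fun hVt => ?_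
  have hsub : s ∩ V ⊆ s \ t := fun y hy => ⟨hy.1, hVt.notMem_of_mem_left hy.2⟩
  exact (hs x hx _ (inter_mem_nhdsWithin s hV)).ne' (measure_mono_null hsub hst)

section DensityPoint

variable {E : Type*} [NormedAddCommGroup E] [NormedSpace ℝ E] [MeasurableSpace E] [BorelSpace E]
  [FiniteDimensional ℝ E] (μ : Measure E) [μ.IsAddHaarMeasure] {s : Set E} {x : E}

theorem mem_tangentConeAt_of_density_one
    (h : Tendsto (fun r => μ (s ∩ closedBall x r) / μ (closedBall x r)) (𝓝[>] 0) (𝓝 1))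
    (v : E) : v ∈ tangentConeAt ℝ s x := by
  have hδ (n : ℕ) : (0 : ℝ) < 1 / (n + 1) := Nat.one_div_pos_of_nat
  have hball (n : ℕ) : ∃ r ∈ Ioo (0 : ℝ) (1 / (n + 1)), ∃ w ∈ closedBall v (1 / (n + 1)),
      x + r • w ∈ s := by
    obtain ⟨r, ⟨z, hzs, hz⟩, hr⟩ := ((Measure.eventually_nonempty_inter_smul_of_density_one μ s x h
      _ measurableSet_closedBall (measure_closedBall_pos μ v (hδ n)).ne').and
      (Ioo_mem_nhdsGT (hδ n))).exists
    rw [singleton_add] at hz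
    obtain ⟨_, ⟨w, hw, rfl⟩, rfl⟩ := hz
    exact ⟨r, hr, w, hw, hzs⟩
  choose r hr w hw hrw using hball
  have hr0 : Tendsto r atTop (𝓝 0) :=
    tendsto_of_tendsto_of_tendsto_of_le_of_le tendsto_const_nhds
      tendsto_one_div_add_atTop_nhds_zero_nat (fun n => (hr n).1.le) (fun n => (hr n).2.le)
  have hwv : Tendsto w atTop (𝓝 v) :=
    tendsto_iff_dist_tendsto_zero.2 <| squeeze_zero (fun _ => dist_nonneg) hw
      tendsto_one_div_add_atTop_nhds_zero_nat
  refine mem_tangentConeAt_of_seq atTop (fun n => (r n)⁻¹) (fun n => r n • w n) ?_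
    (.of_forall hrw) ?_
  · simpa using hr0.smul hwv
  · simpa [smul_smul, inv_mul_cancel₀ (hr _).1.ne'] using hwv

theorem uniqueDiffWithinAt_of_density_one
    (h : Tendsto (fun r => μ (s ∩ closedBall x r) / μ (closedBall x r)) (𝓝[>] 0) (𝓝 1)) :
    UniqueDiffWithinAt ℝ s x := by
  have hcone : tangentConeAt ℝ s x = univ :=
    eq_univ_of_forall (mem_tangentConeAt_of_density_one μ h)
  rw [uniqueDiffWithinAt_iff, hcone]
  exact ⟨by simp, mem_closure_of_nonempty_tangentConeAt (hcone ▸ univ_nonempty)⟩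

theorem fderiv_eq_zero_of_density_one {F : Type*} [NormedAddCommGroup F] [NormedSpace ℝ F]
    {g : E → F} (hx : x ∈ s) (hg : DifferentiableAt ℝ g x) (hgs : ∀ y ∈ s, g y = 0)
    (h : Tendsto (fun r => μ (s ∩ closedBall x r) / μ (closedBall x r)) (𝓝[>] 0) (𝓝 1)) :
    fderiv ℝ g x = 0 :=
  (uniqueDiffWithinAt_of_density_one μ h).eq hg.hasFDerivAt.hasFDerivWithinAt <|
    (hasFDerivWithinAt_const 0 x s).congr hgs (hgs x hx)

theorem fderiv_eq_zero_of_isEverywherePos {F : Type*} [NormedAddCommGroup F] [NormedSpace ℝ F]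
    {g : E → F} (hs : μ.IsEverywherePos s) (hg : ∀ x ∈ s, ContDiffAt ℝ 1 g x)
    (hgs : ∀ y ∈ s, g y = 0) : ∀ x ∈ s, fderiv ℝ g x = 0 := by
  set A := {y ∈ s | Tendsto (fun r => μ (s ∩ closedBall y r) / μ (closedBall y r)) (𝓝[>] 0) (𝓝 1)}
  have hA : μ (s \ A) = 0 := by
    refine measure_mono_null ?_ (Measure.measure_inter_eq_zero_of_restrict
      (ae_iff.1 (Besicovitch.ae_tendsto_measure_inter_div μ s)))
    exact fun y hy => ⟨fun hyA => hy.2 ⟨hy.1, hyA⟩, hy.1⟩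
  have hsA : s ⊆ closure A := hs.subset_closure_of_measure_diff_eq_zero hA
  have hgA : fderiv ℝ g '' A ⊆ {0} := by
    rintro _ ⟨y, hy, rfl⟩
    exact fderiv_eq_zero_of_density_one μ hy.1 ((hg y hy.1).differentiableAt one_ne_zero) hgs hy.2
  intro x hx
  have := (hg x hx).continuousAt_fderiv one_ne_zero |>.continuousWithinAt.mem_closure_image (hsA hx)
  simpa using closure_mono hgA this

theorem iteratedFDeriv_eq_zero_of_isEverywherePos {F : Type*} [NormedAddCommGroup F]
    [NormedSpace ℝ F] {f : E → F} (hs : μ.IsEverywherePos s) (hf : ∀ x ∈ s, ContDiffAt ℝ ∞ f x)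
    (hfs : ∀ x ∈ s, f x = 0) (m : ℕ) : ∀ x ∈ s, iteratedFDeriv ℝ m f x = 0 := by
  induction m with
  | zero =>
    intro x hx
    ext
    simp [hfs x hx]
  | succ n ih =>
    intro x hx
    have hC1 (y) (hy : y ∈ s) : ContDiffAt ℝ 1 (iteratedFDeriv ℝ n f) y :=
      (hf y hy).iteratedFDeriv_right (by exact_mod_cast le_top)
    rw [iteratedFDeriv_succ_eq_comp_left, Function.comp_apply,
      fderiv_eq_zero_of_isEverywherePos μ hs hC1 ih x hx]
    exact LinearIsometryEquiv.map_zero _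

end DensityPoint

lemma posDensity_eq_everywherePosSubset {d : ℕ} (E : Set (Fin d → ℝ)) :
    posDensity E = (volume : Measure (Fin d → ℝ)).everywherePosSubset E := by
  ext x
  refine and_congr_right fun _ => ⟨fun h n hn => ?_, fun h V hV => h _ (inter_mem_nhdsWithin E hV)⟩
  obtain ⟨u, hu, hun⟩ := mem_nhdsWithin_iff_exists_mem_nhds_inter.1 hn
  exact (h u hu).trans_le (measure_mono (inter_comm E u ▸ hun))

theorem smooth_vanishing_on_density_points_is_flat_general
    {d : ℕ} (Ω : Set (Fin d → ℝ)) (hΩ : IsOpen Ω)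
    (E : Set (Fin d → ℝ)) (hEΩ : E ⊆ Ω) (hE : MeasurableSet E) :
    (∀ f : (Fin d → ℝ) → ℝ, ContDiffOn ℝ (⊤ : ℕ∞) f Ω →
        (∀ x ∈ posDensity E, f x = 0) →
        ∀ (m : ℕ), ∀ x ∈ posDensity E, iteratedFDeriv ℝ m f x = 0) ∧
    volume (E \ posDensity E) = 0 := by
  rw [posDensity_eq_everywherePosSubset]
  refine ⟨fun f hf hf0 => iteratedFDeriv_eq_zero_of_isEverywherePos volume
    (Measure.isEverywherePos_everywherePosSubset hE)
    (fun x hx => hf.contDiffAt (hΩ.mem_nhds (hEΩ hx.1))) hf0, ?_⟩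
  exact (ae_eq_set.1 (Measure.everywherePosSubset_ae_eq hE)).2

/-- **Lemma 3.4.**  Let `Ω ⊆ ℝ^d` be open, `E ⊆ Ω` measurable of positive Lebesgue
measure and let `E⁰ = posDensity E` be its set of points of positive Lebesgue density.
Then (a) every smooth function on `Ω` vanishing on `E⁰` is flat at `E⁰`
(all its derivatives vanish there), and (b) `E ∖ E⁰` is Lebesgue negligible. -/
theorem smooth_vanishing_on_density_points_is_flat
    {d : ℕ} (hd : 1 ≤ d) (Ω : Set (Fin d → ℝ)) (hΩ : IsOpen Ω)
    (E : Set (Fin d → ℝ)) (hEΩ : E ⊆ Ω) (hE : MeasurableSet E)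
    (hpos : 0 < volume E) :
    (∀ f : (Fin d → ℝ) → ℝ, ContDiffOn ℝ (⊤ : ℕ∞) f Ω →
        (∀ x ∈ posDensity E, f x = 0) →
        ∀ (m : ℕ), ∀ x ∈ posDensity E, iteratedFDeriv ℝ m f x = 0) ∧
    volume (E \ posDensity E) = 0 :=
  smooth_vanishing_on_density_points_is_flat_general Ω hΩ E hEΩ hE
end
end

section
/- Lemma 7.14 (modified small divisors). Let n ≥ 2 be an integer, τ > n−1, 0 < κ < 1, and let k ∈ ℤ^{n−1} with k ≠ 0, where |k| := Σ_j |k_j|. Let φ ∈ C^∞(ℝ) satisfy 0 ≤ φ ≤ 1, φ(x) = 1 for |x| ≤ π/5 and φ(x) = 0 for |x| ≥ π/4, and set φ_k(x) := Σ_{j∈ℤ} φ((x − 2πj)|k|^τ κ^{−1}) (for each x at most one summand is nonzero, since |k|^τ κ^{−1} > 1). Define z_k : ℝ^{n−1} → ℂ by z_k(ω) := 1 − e^{i⟨ω,k⟩} + (κ/3)(1+|k|)^{−τ} φ_k(⟨ω,k⟩). Then: (a) |z_k(ω)| ≥ (κ/3)(1+|k|)^{−τ} for every ω ∈ ℝ^{n−1};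 (b) if ω ∈ ℝ^{n−1} satisfies dist(⟨ω,k⟩, 2πℤ) ≥ κ|k|^{−τ} (in particular if ω belongs to the Diophantine set D(κ,τ)), then z_k(ω) = 1 − e^{i⟨ω,k⟩}. -/
/-!
Only the summand of `φ_k(x)` whose `2πj` is nearest to `x` can be nonzero, because
`|k|^τ κ⁻¹ > 1`. Where that summand equals `1`, the real part of `z_k` is `1 - cos x + c ≥ c`,
with `c = (κ/3)(1+|k|)^{-τ}`. Elsewhere `x` lies at distance at least `(π/5) κ |k|^{-τ}` from
`2πℤ`, so Jordan's inequality gives `|1 - e^{ix}| ≥ (2/5) κ |k|^{-τ} ≥ c`; adding the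
nonnegative real number `c φ_k(x)` to `1 - e^{ix}`, whose real part is nonnegative, does not
decrease the modulus. Under the Diophantine condition every summand of `φ_k` vanishes.
-/

open Real

noncomputable section

namespace Complex

lemma norm_le_norm_add_ofReal {w : ℂ} (hw : 0 ≤ w.re) {r : ℝ} (hr : 0 ≤ r) :
    ‖w‖ ≤ ‖w + r‖ := by
  rw [norm_def, norm_def]
  apply Real.sqrt_le_sqrt
  simp only [normSq_apply, add_re, ofReal_re, add_im, ofReal_im, add_zero]
  nlinarith

lemma two_div_pi_mul_abs_le_norm_one_sub_exp {x : ℝ} {m : ℤ} (hm : |x - 2 * π * m| ≤ π) :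
    2 / π * |x - 2 * π * m| ≤ ‖1 - exp (I * x)‖ := by
  have hsin : |Real.sin (x / 2)| = |Real.sin ((x - 2 * π * m) / 2)| := by
    rw [show x / 2 = (x - 2 * π * m) / 2 + m * π by ring, sin_add_int_mul_pi, abs_mul,
      abs_neg_one_zpow, one_mul]
  have hjordan := mul_abs_le_abs_sin (x := (x - 2 * π * m) / 2)
    (by rw [abs_div, abs_two]; linarith)
  rw [abs_div, abs_two] at hjordan
  rw [norm_sub_rev, norm_exp_I_mul_ofReal_sub_one, norm_mul, Real.norm_eq_abs,
    Real.norm_eq_abs, hsin, abs_two]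
  linarith

lemma le_norm_one_sub_exp_add_mul {x c p : ℝ} (hc : 0 ≤ c) (hp : 0 ≤ p)
    (h : p = 1 ∨ c ≤ ‖1 - exp (I * x)‖) : c ≤ ‖1 - exp (I * x) + (c * p : ℝ)‖ := by
  have hre : (1 - exp (I * x)).re = 1 - Real.cos x := by
    rw [mul_comm, sub_re, one_re, exp_ofReal_mul_I_re]
  rcases h with rfl | h
  · refine le_trans ?_ (re_le_norm _)
    rw [add_re, hre, ofReal_re, mul_one]
    linarith [Real.cos_le_one x]
  · refine h.trans (norm_le_norm_add_ofReal ?_ (mul_nonneg hc hp))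
    rw [hre]
    linarith [Real.cos_le_one x]

end Complex

lemma abs_sub_two_pi_mul_round_le (x : ℝ) : |x - 2 * π * round (x / (2 * π))| ≤ π := by
  have h := abs_sub_round (x / (2 * π))
  rw [show x / (2 * π) - round (x / (2 * π)) = (x - 2 * π * round (x / (2 * π))) / (2 * π) by
    field_simp, abs_div, abs_of_pos two_pi_pos, div_le_iff₀ two_pi_pos] at h
  linarith

lemma pi_le_abs_sub_two_pi_mul_of_ne {x : ℝ} {m j : ℤ} (hm : |x - 2 * π * m| ≤ π) (hj : j ≠ m) :
    π ≤ |x - 2 * π * j| := by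
  have hmj : (1 : ℝ) ≤ |(m : ℝ) - j| := by exact_mod_cast Int.one_le_abs (sub_ne_zero.mpr hj.symm)
  have := abs_sub (x - 2 * π * j) (x - 2 * π * m)
  rw [show x - 2 * π * j - (x - 2 * π * m) = 2 * π * ((m : ℝ) - j) by ring, abs_mul,
    abs_of_pos two_pi_pos] at this
  nlinarith [pi_pos]

-- The paper's `φ_k` is `periodize φ (|k|^τ / κ)`.
def periodize (φ : ℝ → ℝ) (s x : ℝ) : ℝ := ∑' j : ℤ, φ ((x - 2 * π * j) * s)

section periodize

variable {φ : ℝ → ℝ} {a s : ℝ}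

lemma periodize_nonneg (hφ : ∀ y, 0 ≤ φ y) (s x : ℝ) : 0 ≤ periodize φ s x :=
  tsum_nonneg fun _ => hφ _

lemma periodize_eq_zero (hφ : ∀ y, a ≤ |y| → φ y = 0) (hs : 0 ≤ s) {x : ℝ}
    (hx : ∀ j : ℤ, a ≤ |x - 2 * π * j| * s) : periodize φ s x = 0 :=
  (tsum_congr fun j => hφ _ (by rw [abs_mul, abs_of_nonneg hs]; exact hx j)).trans tsum_zero

lemma periodize_eq_single (hφ : ∀ y, a ≤ |y| → φ y = 0) (has : a ≤ π * s) (hs : 0 ≤ s) (x : ℝ) :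
    periodize φ s x = φ ((x - 2 * π * round (x / (2 * π))) * s) := by
  refine tsum_eq_single _ fun j hj => hφ _ ?_
  rw [abs_mul, abs_of_nonneg hs]
  exact has.trans (mul_le_mul_of_nonneg_right
    (pi_le_abs_sub_two_pi_mul_of_ne (abs_sub_two_pi_mul_round_le x) hj) hs)

lemma le_norm_one_sub_exp_add_mul_periodize (hφ0 : ∀ y, 0 ≤ φ y)
    (hφone : ∀ y, |y| ≤ π / 5 → φ y = 1) (hφzero : ∀ y, π / 4 ≤ |y| → φ y = 0)
    (hs : 1 / 4 ≤ s) {c : ℝ} (hc : 0 ≤ c) (hcs : c * s ≤ 2 / 5) (x : ℝ) :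
    c ≤ ‖1 - Complex.exp (Complex.I * x) + (c * periodize φ s x : ℝ)‖ := by
  have hd := abs_sub_two_pi_mul_round_le x
  set d := x - 2 * π * round (x / (2 * π))
  have hs0 : 0 < s := by linarith
  refine Complex.le_norm_one_sub_exp_add_mul hc (periodize_nonneg hφ0 s x) ?_
  rw [periodize_eq_single hφzero (by nlinarith [pi_pos]) hs0.le]
  by_cases hnear : |d * s| ≤ π / 5
  · exact Or.inl (hφone _ hnear)
  · right
    rw [not_le, abs_mul, abs_of_pos hs0] at hnear
    have h25 : 2 / 5 < 2 / π * |d| * s := by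
      rw [show 2 / π * |d| * s = 2 * (|d| * s) / π by ring, lt_div_iff₀ pi_pos]
      linarith
    have hcd : c ≤ 2 / π * |d| := le_of_mul_le_mul_right (hcs.trans h25.le) hs0
    exact hcd.trans (Complex.two_div_pi_mul_abs_le_norm_one_sub_exp hd)

end periodize

lemma one_le_sum_abs_of_apply_ne_zero {ι : Type*} [Fintype ι] {k : ι → ℤ} {i : ι} (hi : k i ≠ 0) :
    1 ≤ ∑ j, |(k j : ℝ)| :=
  (by exact_mod_cast Int.one_le_abs hi : (1 : ℝ) ≤ |(k i : ℝ)|).trans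
    (Finset.single_le_sum (f := fun j => |(k j : ℝ)|) (fun j _ => abs_nonneg _) (Finset.mem_univ i))

theorem modified_small_divisors_general
    (n : ℕ) (τ κ : ℝ) (hτ : (n : ℝ) - 1 < τ) (hκ0 : 0 < κ) (hκ1 : κ < 1)
    (k : Fin (n - 1) → ℤ) (hk : k ≠ 0)
    (φ : ℝ → ℝ)
    (hφrange : ∀ x, 0 ≤ φ x ∧ φ x ≤ 1)
    (hφone : ∀ x, |x| ≤ π / 5 → φ x = 1)
    (hφzero : ∀ x, π / 4 ≤ |x| → φ x = 0)
    (nk : ℝ) (hnk : nk = ∑ j, |(k j : ℝ)|)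
    (φk : ℝ → ℝ) (hφk : ∀ x, φk x = ∑' j : ℤ, φ ((x - 2 * π * (j : ℝ)) * nk ^ τ / κ))
    (z : (Fin (n - 1) → ℝ) → ℂ)
    (hz : ∀ ω, z ω = 1 - Complex.exp (Complex.I * ((∑ j, ω j * (k j : ℝ) : ℝ) : ℂ))
        + (((κ / 3) * (1 + nk) ^ (-τ) * φk (∑ j, ω j * (k j : ℝ)) : ℝ) : ℂ)) :
    (∀ ω : Fin (n - 1) → ℝ, κ / 3 * (1 + nk) ^ (-τ) ≤ ‖z ω‖) ∧
    (∀ ω : Fin (n - 1) → ℝ,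
      (∀ m : ℤ, κ / nk ^ τ ≤ |(∑ j, ω j * (k j : ℝ)) - 2 * π * (m : ℝ)|) →
      z ω = 1 - Complex.exp (Complex.I * ((∑ j, ω j * (k j : ℝ) : ℝ) : ℂ))) := by
  obtain ⟨i, hi⟩ := Function.ne_iff.mp hk
  have hτ0 : 0 ≤ τ := by
    have : (2 : ℝ) ≤ n := by exact_mod_cast (by have := i.pos; omega : 2 ≤ n)
    linarith
  have hnk1 : 1 ≤ nk := hnk ▸ one_le_sum_abs_of_apply_ne_zero hi
  have hpow : 1 ≤ nk ^ τ := one_le_rpow hnk1 hτ0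
  have hs : 1 ≤ nk ^ τ / κ := (one_le_div hκ0).mpr (by linarith)
  have hcs : κ / 3 * (1 + nk) ^ (-τ) * (nk ^ τ / κ) ≤ 2 / 5 := by
    have hmono : nk ^ τ ≤ (1 + nk) ^ τ := rpow_le_rpow (by linarith) (by linarith) hτ0
    rw [rpow_neg (by linarith), show κ / 3 * ((1 + nk) ^ τ)⁻¹ * (nk ^ τ / κ)
      = nk ^ τ / (1 + nk) ^ τ / 3 by field_simp, div_le_iff₀ (by norm_num)]
    linarith [div_le_one_of_le₀ hmono (by positivity)]
  have hφk_eq : ∀ x, φk x = periodize φ (nk ^ τ / κ) x := fun x => by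
    simp only [hφk, periodize, mul_div_assoc]
  refine ⟨fun ω => ?_, fun ω hω => ?_⟩
  · rw [hz ω, hφk_eq]
    exact le_norm_one_sub_exp_add_mul_periodize (fun y => (hφrange y).1) hφone hφzero
      (by linarith) (by positivity) hcs _
  · rw [hz ω, hφk_eq, periodize_eq_zero hφzero (by linarith) fun m => ?_, mul_zero,
      Complex.ofReal_zero, add_zero]
    calc π / 4 ≤ κ / nk ^ τ * (nk ^ τ / κ) := by
          rw [div_mul_div_cancel₀ (by positivity), div_self hκ0.ne']
          linarith [pi_le_four]
      _ ≤ _ := mul_le_mul_of_nonneg_right (hω m) (by linarith)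

/-- **Lemma 7.14 (modified small divisors).**  For `k ∈ ℤ^{n-1} ∖ {0}` let
`z_k(ω) = 1 - e^{i⟨ω,k⟩} + (κ/3)(1+|k|)^{-τ} φ_k(⟨ω,k⟩)`, where `φ_k` is the
`2π`-periodization of the rescaled cut-off `φ`.  Then `|z_k(ω)| ≥ (κ/3)(1+|k|)^{-τ}`
everywhere, and `z_k(ω) = 1 - e^{i⟨ω,k⟩}` whenever `dist(⟨ω,k⟩, 2πℤ) ≥ κ|k|^{-τ}`. -/
theorem modified_small_divisors
    (n : ℕ) (hn : 2 ≤ n) (τ κ : ℝ) (hτ : (n : ℝ) - 1 < τ) (hκ0 : 0 < κ) (hκ1 : κ < 1)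
    (k : Fin (n - 1) → ℤ) (hk : k ≠ 0)
    (φ : ℝ → ℝ) (hφsmooth : ContDiff ℝ (⊤ : ℕ∞) φ)
    (hφrange : ∀ x, 0 ≤ φ x ∧ φ x ≤ 1)
    (hφone : ∀ x, |x| ≤ π / 5 → φ x = 1)
    (hφzero : ∀ x, π / 4 ≤ |x| → φ x = 0)
    (nk : ℝ) (hnk : nk = ∑ j, |(k j : ℝ)|)
    (φk : ℝ → ℝ) (hφk : ∀ x, φk x = ∑' j : ℤ, φ ((x - 2 * π * (j : ℝ)) * nk ^ τ / κ))
    (z : (Fin (n - 1) → ℝ) → ℂ)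
    (hz : ∀ ω, z ω = 1 - Complex.exp (Complex.I * ((∑ j, ω j * (k j : ℝ) : ℝ) : ℂ))
        + (((κ / 3) * (1 + nk) ^ (-τ) * φk (∑ j, ω j * (k j : ℝ)) : ℝ) : ℂ)) :
    (∀ ω : Fin (n - 1) → ℝ, κ / 3 * (1 + nk) ^ (-τ) ≤ ‖z ω‖) ∧
    (∀ ω : Fin (n - 1) → ℝ,
      (∀ m : ℤ, κ / nk ^ τ ≤ |(∑ j, ω j * (k j : ℝ)) - 2 * π * (m : ℝ)|) →
      z ω = 1 - Complex.exp (Complex.I * ((∑ j, ω j * (k j : ℝ) : ℝ) : ℂ))) :=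
  modified_small_divisors_general n τ κ hτ hκ0 hκ1 k hk φ hφrange hφone hφzero nk hnk φk hφk z hz
end
end

section
/- Corollary B.6 (explicit twist data for elliptical billiard tables). Let ε > 0 and N > 0. Set q(y) := −4ε²π² sinh²(2πy) for y ∈ [−N,N], and let α₀ := 4π²ε², α₁ := −16π⁴ε², α₂ := (64π⁶/3)ε² (these are the Taylor coefficients at x₀ = 1/4 of f(x) = 4ε²π² sin²(2πx), i.e. f(x) = α₀ + α₁(x−x₀)² + α₂(x−x₀)⁴ + O((x−x₀)⁶)). Define A := −(√(−α₁)/π) ∫_{−N}^{N} (α₀ − q(y))^{−1/2} dy and B := (α₁/(4π²)) ( 2 ∫_{−N}^{N} (α₀ − q(y))^{−3/2} dy − (3α₂/α₁²) ∫_{−N}^{N} (α₀ − q(y))^{−1/2} dy ) (by Theorem B.5 these equal the first and second derivatives dK/dI(0) and d²K/dI²(0) at the elliptic fixed point of the Hamiltonian K generating the billiard ball map of the elliptical billiard table, written in action-angle coordinates). Then A = −(2/π) · arctan(sinh(2πN)) and −1 < A < 0, and B = −(1/(2π²ε)) · sinh(2πN)/cosh²(2πN) and B < 0. In particular the Poincaré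 map of the elliptic billiard ball map is nondegenerate (twisted) at the elliptic fixed point. -/
/-!
Since `α₀ - q(y) = (2πε cosh 2πy)²`, the two integrands are constant multiples of `sech` and
`sech³` of `2πy`, whose antiderivatives are `arctan ∘ sinh` and `(sinh / cosh² + arctan ∘ sinh) / 2`.
Both are odd, so the integrals over `[-N, N]` are explicit; in `B` the coefficients are such that
the `arctan` terms cancel, leaving only `sinh / cosh²`.
-/

open Real Set intervalIntegral

lemma sq_rpow_neg_div_two {x : ℝ} (hx : 0 ≤ x) (s : ℝ) : (x ^ 2) ^ (-s / 2) = (x ^ s)⁻¹ := by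
  rw [← rpow_natCast, ← rpow_mul hx, ← rpow_neg hx]
  congr 1
  push_cast
  ring

lemma hasDerivAt_arctan_sinh (x : ℝ) : HasDerivAt (fun x => arctan (sinh x)) (cosh x)⁻¹ x := by
  convert (hasDerivAt_sinh x).arctan using 1
  have := (cosh_pos x).ne'
  field_simp
  rw [cosh_sq']

lemma hasDerivAt_sinh_div_cosh_sq_add_arctan_sinh (x : ℝ) :
    HasDerivAt (fun x => sinh x / cosh x ^ 2 + arctan (sinh x)) (2 * (cosh x ^ 3)⁻¹) x := by
  have hcosh := (cosh_pos x).ne'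
  have h : HasDerivAt (fun x => sinh x / cosh x ^ 2 + arctan (sinh x)) _ x :=
    ((hasDerivAt_sinh x).div ((hasDerivAt_cosh x).fun_pow 2) (pow_ne_zero 2 hcosh)).add
      (hasDerivAt_arctan_sinh x)
  convert h using 1
  field_simp
  simp only [sinh_sq]
  ring

lemma integral_inv_cosh_mul {k : ℝ} (hk : k ≠ 0) (a b : ℝ) :
    ∫ y in a..b, (cosh (k * y))⁻¹ = (arctan (sinh (k * b)) - arctan (sinh (k * a))) / k := by
  rw [integral_comp_mul_left (fun x => (cosh x)⁻¹) hk,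
    integral_eq_sub_of_hasDerivAt (fun x _ => hasDerivAt_arctan_sinh x)
      ((continuous_cosh.inv₀ fun x => (cosh_pos x).ne').intervalIntegrable _ _),
    smul_eq_mul, inv_mul_eq_div]

lemma integral_inv_cosh_mul_pow_three {k : ℝ} (hk : k ≠ 0) (a b : ℝ) :
    ∫ y in a..b, (cosh (k * y) ^ 3)⁻¹ =
      (sinh (k * b) / cosh (k * b) ^ 2 + arctan (sinh (k * b))
        - (sinh (k * a) / cosh (k * a) ^ 2 + arctan (sinh (k * a)))) / (2 * k) := by
  have hderiv (x : ℝ) := (hasDerivAt_sinh_div_cosh_sq_add_arctan_sinh x).div_const 2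
  simp only [mul_div_cancel_left₀ _ (two_ne_zero' ℝ)] at hderiv
  rw [integral_comp_mul_left (fun x => (cosh x ^ 3)⁻¹) hk,
    integral_eq_sub_of_hasDerivAt (fun x _ => hderiv x)
      (((continuous_cosh.pow 3).inv₀ fun x => pow_ne_zero 3 (cosh_pos x).ne').intervalIntegrable
        _ _),
    smul_eq_mul]
  field_simp

lemma neg_two_div_pi_mul_arctan_mem_Ioo {x : ℝ} (hx : 0 < x) :
    -(2 / π) * arctan x ∈ Ioo (-1) 0 := by
  have hlt := arctan_lt_pi_div_two x
  have hpos := arctan_pos.2 hx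
  have := pi_pos
  constructor
  · have : 2 / π * arctan x < 1 := by
      rw [div_mul_eq_mul_div, div_lt_one pi_pos]
      linarith
    linarith
  · have : 0 < 2 / π * arctan x := by positivity
    linarith

lemma integral_sq_mul_cosh_rpow_neg_one_div_two {c k : ℝ} (hc : 0 < c) (hk : k ≠ 0) (N : ℝ) :
    ∫ y in (-N)..N, ((c * cosh (k * y)) ^ 2) ^ (-(1 : ℝ) / 2) =
      2 * arctan (sinh (k * N)) / (c * k) := by
  have hpos (y : ℝ) : 0 ≤ c * cosh (k * y) := by have := cosh_pos (k * y); positivity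
  simp only [sq_rpow_neg_div_two, hpos, rpow_one, mul_inv, integral_const_mul,
    integral_inv_cosh_mul hk, mul_neg, sinh_neg, arctan_neg]
  field_simp
  ring

lemma integral_sq_mul_cosh_rpow_neg_three_div_two {c k : ℝ} (hc : 0 < c) (hk : k ≠ 0)
    (N : ℝ) :
    ∫ y in (-N)..N, ((c * cosh (k * y)) ^ 2) ^ (-(3 : ℝ) / 2) =
      (sinh (k * N) / cosh (k * N) ^ 2 + arctan (sinh (k * N))) / (c ^ 3 * k) := by
  have hpos (y : ℝ) : 0 ≤ c * cosh (k * y) := by have := cosh_pos (k * y); positivity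
  simp only [sq_rpow_neg_div_two, hpos]
  simp only [rpow_ofNat, mul_pow, mul_inv, integral_const_mul,
    integral_inv_cosh_mul_pow_three hk, mul_neg, sinh_neg, cosh_neg, arctan_neg]
  field_simp
  ring

/-- **Corollary B.6 (explicit twist data for elliptical billiard tables).**
With `q(y) = -4ε²π² sinh²(2πy)` and the Taylor coefficients `α₀, α₁, α₂` of
`f(x) = 4ε²π² sin²(2πx)` at `x₀ = 1/4`, the quantities
`A = dK/dI(0)` and `B = d²K/dI²(0)` of Theorem B.5 satisfy
`A = -(2/π) arctan(sinh 2πN) ∈ (-1,0)` and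
`B = -(1/(2π²ε)) sinh(2πN)/cosh²(2πN) < 0`. -/
theorem elliptical_billiard_twist
    (ε N : ℝ) (hε : 0 < ε) (hN : 0 < N)
    (α₀ α₁ α₂ : ℝ)
    (h0 : α₀ = 4 * π ^ 2 * ε ^ 2)
    (h1 : α₁ = -(16 * π ^ 4 * ε ^ 2))
    (h2 : α₂ = 64 * π ^ 6 / 3 * ε ^ 2)
    (q : ℝ → ℝ) (hq : ∀ y, q y = -(4 * ε ^ 2 * π ^ 2) * Real.sinh (2 * π * y) ^ 2)
    (A B : ℝ)
    (hA : A = -(Real.sqrt (-α₁) / π) * ∫ y in (-N)..N, (α₀ - q y) ^ (-(1 : ℝ) / 2))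
    (hB : B = α₁ / (4 * π ^ 2) *
        (2 * (∫ y in (-N)..N, (α₀ - q y) ^ (-(3 : ℝ) / 2))
          - 3 * α₂ / α₁ ^ 2 * ∫ y in (-N)..N, (α₀ - q y) ^ (-(1 : ℝ) / 2))) :
    A = -(2 / π) * Real.arctan (Real.sinh (2 * π * N)) ∧ -1 < A ∧ A < 0 ∧
    B = -(1 / (2 * π ^ 2 * ε)) * (Real.sinh (2 * π * N) / Real.cosh (2 * π * N) ^ 2) ∧
    B < 0 := by
  have hπ := pi_pos
  have hα₀_sub_q (y : ℝ) : α₀ - q y = (2 * π * ε * cosh (2 * π * y)) ^ 2 := by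
    rw [h0, hq]
    linear_combination (-(4 * π ^ 2 * ε ^ 2)) * cosh_sq (2 * π * y)
  have hsqrt : √(-α₁) = 4 * π ^ 2 * ε := by
    rw [h1, neg_neg, show 16 * π ^ 4 * ε ^ 2 = (4 * π ^ 2 * ε) ^ 2 by ring,
      sqrt_sq (by positivity)]
  have hc : 0 < 2 * π * ε := by positivity
  have hk : 2 * π ≠ 0 := by positivity
  simp only [hα₀_sub_q, integral_sq_mul_cosh_rpow_neg_one_div_two hc hk,
    integral_sq_mul_cosh_rpow_neg_three_div_two hc hk] at hA hB
  have hA' : A = -(2 / π) * arctan (sinh (2 * π * N)) := by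
    rw [hA, hsqrt]
    field_simp
    ring
  have hB' : B = -(1 / (2 * π ^ 2 * ε)) * (sinh (2 * π * N) / cosh (2 * π * N) ^ 2) := by
    have := (cosh_pos (2 * π * N)).ne'
    rw [hB, h1, h2]
    field_simp
    ring
  have hsinh : 0 < sinh (2 * π * N) := sinh_pos_iff.2 (by positivity)
  obtain ⟨hA_gt, hA_lt⟩ := hA' ▸ neg_two_div_pi_mul_arctan_mem_Ioo hsinh
  refine ⟨hA', hA_gt, hA_lt, hB', ?_⟩
  rw [hB', neg_mul, neg_lt_zero]
  have := cosh_pos (2 * π * N)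
  positivity
end

section
/- Lemma A.16 (factorization of a generated near-integrable map). Let d ≥ 1, let D ⊆ ℝ^d be open, set 𝔸 := 𝕋^d × D, let K ∈ C^∞(D, ℝ) and let G ∈ C^∞(𝔸, ℝ) with supp G ⊂ 𝕋^d × F for some compact F ⊂ D. Let 0 < κ ≤ 1 and 0 < ε₀ < 1, and assume 2d · ‖σ_κ^{−1} sgrad G‖_{1,𝔸;κ} ≤ ε₀ (where sgrad G := (∇_r G, −∇_θ G), σ_κ(θ,r) := (θ,κr), σ_κ^{−1} sgrad G := (∇_r G, −κ^{−1}∇_θ G) and ‖u‖_{ℓ,𝔸;κ} := ‖u ∘ σ_κ‖_{C^ℓ(σ_κ^{−1}(𝔸))}) and ‖∇_θ G‖_{C⁰} < dist(F, ℝ^d ∖ D). Then: (a) the function (θ,r) ↦ ⟨θ,r⟩ − G(θ,r) is a generating function of a smooth map W : 𝔸 → 𝔸, i.e. the map θ ↦ θ − ∇_r G(θ,r) is a diffeomorphism of 𝕋^d for each r ∈ D and there is a unique smooth W with W(θ − ∇_r G(θ,r), r) = (θ, r − ∇_θ G(θ,r)) for all (θ,r) ∈ 𝔸; moreover W − id vanishes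 outside 𝕋^d × F; (b) the function (θ,r) ↦ ⟨θ,r⟩ − K(r) − G(θ,r) is a generating function of a smooth map P : 𝔸 → 𝔸, i.e. P(θ − ∇K(r) − ∇_r G(θ,r), r) = (θ, r − ∇_θ G(θ,r)) for all (θ,r) ∈ 𝔸; (c) P = W ∘ Q on 𝔸, where Q(θ,r) := (θ + ∇K(r), r). -/
open Real Set Metric
open scoped ENNReal

noncomputable section

/-- `ℝ≥0∞`-valued Hölder norm of order `ℓ ≥ 0` of `f` on `s`. -/
def eHolder {E F : Type*} [NormedAddCommGroup E] [NormedSpace ℝ E]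
    [NormedAddCommGroup F] [NormedSpace ℝ F] (ℓ : ℝ) (s : Set E) (f : E → F) : ℝ≥0∞ :=
  (⨆ (m : ℕ) (_ : (m : ℝ) ≤ ℓ) (x ∈ s), (‖iteratedFDerivWithin ℝ m f s x‖₊ : ℝ≥0∞)) ⊔
  (⨆ (_ : (⌊ℓ⌋₊ : ℝ) < ℓ) (x ∈ s) (y ∈ s) (_ : x ≠ y),
      (‖iteratedFDerivWithin ℝ ⌊ℓ⌋₊ f s x - iteratedFDerivWithin ℝ ⌊ℓ⌋₊ f s y‖₊ : ℝ≥0∞) /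
        ENNReal.ofReal (‖x - y‖ ^ (ℓ - (⌊ℓ⌋₊ : ℝ))))

/-- Gradient in the first (angle) variables. -/
def gradθ {d : ℕ} (G : (Fin d → ℝ) × (Fin d → ℝ) → ℝ)
    (p : (Fin d → ℝ) × (Fin d → ℝ)) : Fin d → ℝ :=
  fun j => fderiv ℝ G p ((Pi.single j 1 : Fin d → ℝ), 0)

/-- Gradient in the second (action) variables. -/
def gradr {d : ℕ} (G : (Fin d → ℝ) × (Fin d → ℝ) → ℝ)
    (p : (Fin d → ℝ) × (Fin d → ℝ)) : Fin d → ℝ :=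
  fun j => fderiv ℝ G p (0, (Pi.single j 1 : Fin d → ℝ))

/-- Gradient of a function of the action variables only. -/
def gradv {d : ℕ} (K : (Fin d → ℝ) → ℝ) (x : Fin d → ℝ) : Fin d → ℝ :=
  fun j => fderiv ℝ K x (Pi.single j 1)

/-- The rescaled symplectic gradient `(σ_κ⁻¹ sgrad G) ∘ σ_κ`. -/
def sgradScaled {d : ℕ} (κ : ℝ) (G : (Fin d → ℝ) × (Fin d → ℝ) → ℝ) :
    (Fin d → ℝ) × (Fin d → ℝ) → (Fin d → ℝ) × (Fin d → ℝ) :=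
  fun p => (gradr G (p.1, κ • p.2), -(κ⁻¹ • gradθ G (p.1, κ • p.2)))

/-!
For each `r`, the smallness hypothesis bounds the `θ`-derivative of `∇_r G` by `ε₀ < 1`, so
`θ ↦ ∇_r G(θ, r)` is a contraction and the shear `Φ(θ, r) = (θ - ∇_r G(θ, r), r)` is a bijection.
Its derivative is a linear shear of the same kind, hence invertible, so `Φ` is a smooth
diffeomorphism. The generating relation then defines `W = (θ, r - ∇_θ G) ∘ Φ⁻¹`, and `P = W ∘ Q`
because the relation generating `P` is the one generating `W`, precomposed with `Q`.
-/

open Function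
open scoped NNReal

theorem ContractingWith.bijective_sub {E : Type*} [NormedAddCommGroup E] [CompleteSpace E]
    {K : ℝ≥0} {f : E → E} (hf : ContractingWith K f) : Bijective fun x => x - f x := by
  refine ⟨fun x y hxy => ?_, fun y => ?_⟩
  · have hdist : dist x y ≤ K * dist x y :=
      calc dist x y = dist (f x) (f y) := by
            rw [dist_eq_norm, dist_eq_norm, sub_eq_sub_iff_sub_eq_sub.1 hxy]
        _ ≤ K * dist x y := hf.2.dist_le_mul x y
    exact dist_le_zero.1 <| by nlinarith [hf.1, dist_nonneg (x := x) (y := y)]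
  · have hg : ContractingWith K fun x => y + f x :=
      ⟨hf.1, LipschitzWith.of_dist_le_mul fun a b => by
        simpa only [dist_add_left] using hf.2.dist_le_mul a b⟩
    exact ⟨hg.fixedPoint, sub_eq_iff_eq_add.2 hg.fixedPoint_isFixedPt.symm⟩

section Shear

variable {E P : Type*} [NormedAddCommGroup E]

def shear (g : E × P → E) (p : E × P) : E × P := (p.1 - g p, p.2)

theorem shear_add [Add P] {g : E × P → E} {v : E × P} (hg : Periodic g v) (q : E × P) :
    shear g (q + v) = shear g q + v :=
  Prod.ext (by simp only [shear, hg q, Prod.fst_add]; abel) rfl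

variable [CompleteSpace E] {K : ℝ≥0} {g : E × P → E}

theorem shear_bijective (hK : K < 1) (hg : ∀ r, LipschitzWith K fun θ => g (θ, r)) :
    Bijective (shear g) := by
  have hfiber r := ContractingWith.bijective_sub (f := fun θ => g (θ, r)) ⟨hK, hg r⟩
  refine ⟨fun ⟨θ, r⟩ ⟨θ', r'⟩ h => ?_, fun ⟨y, r⟩ => ?_⟩
  · obtain ⟨h1, rfl : r = r'⟩ := Prod.ext_iff.1 h
    exact Prod.ext ((hfiber r).1 h1) rfl
  · obtain ⟨θ, hθ⟩ := (hfiber r).2 y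
    exact ⟨(θ, r), Prod.ext hθ rfl⟩

def shearEquiv (hK : K < 1) (hg : ∀ r, LipschitzWith K fun θ => g (θ, r)) : E × P ≃ E × P :=
  Equiv.ofBijective (shear g) (shear_bijective hK hg)

variable [NormedAddCommGroup P] {h : E × P → P}

/-- The map generated by `⟨θ, r⟩ - S` when `g = ∇_r S` and `h = ∇_θ S`. -/
def generatedMap (hK : K < 1) (hg : ∀ r, LipschitzWith K fun θ => g (θ, r)) (h : E × P → P) :
    E × P → E × P :=
  (fun q => (q.1, q.2 - h q)) ∘ (shearEquiv hK hg).symm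

theorem generatedMap_shear (hK : K < 1) (hg : ∀ r, LipschitzWith K fun θ => g (θ, r))
    (q : E × P) : generatedMap hK hg h (shear g q) = (q.1, q.2 - h q) := by
  rw [generatedMap, comp_apply, show shear g q = shearEquiv hK hg q from rfl,
    Equiv.symm_apply_apply]

theorem generatedMap_apply_of_eq_zero (hK : K < 1) (hg : ∀ r, LipschitzWith K fun θ => g (θ, r))
    {q : E × P} (hgq : g q = 0) (hhq : h q = 0) : generatedMap hK hg h q = q := by
  have hq : shear g q = q := by simp [shear, hgq]
  simpa [hq, hhq] using generatedMap_shear hK hg (h := h) q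

theorem generatedMap_add (hK : K < 1) (hg : ∀ r, LipschitzWith K fun θ => g (θ, r))
    {v : E × P} (hgv : Periodic g v) (hhv : Periodic h v) (p : E × P) :
    generatedMap hK hg h (p + v) = generatedMap hK hg h p + v := by
  have hshear : Semiconj (shearEquiv hK hg) (· + v) (· + v) := shear_add hgv
  have htwist : Semiconj (fun q : E × P => (q.1, q.2 - h q)) (· + v) (· + v) := fun q =>
    Prod.ext rfl (by simp only [hhv q, Prod.snd_add]; abel)
  exact htwist.comp_left (hshear.inverse_left (shearEquiv hK hg).left_inv
    (shearEquiv hK hg).right_inv) p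

theorem eq_generatedMap_of_shear (hK : K < 1) (hg : ∀ r, LipschitzWith K fun θ => g (θ, r))
    {S : Set P} {W : E × P → E × P} (hW : ∀ θ, ∀ r ∈ S, W (shear g (θ, r)) = (θ, r - h (θ, r)))
    {p : E × P} (hp : p.2 ∈ S) : W p = generatedMap hK hg h p := by
  set q := (shearEquiv hK hg).symm p
  have hq : shear g q = p := (shearEquiv hK hg).apply_symm_apply p
  have hqS : q.2 ∈ S := by rwa [← hq] at hp
  rw [← hq, hW q.1 q.2 hqS, generatedMap_shear]

end Shear

section SmoothShear

variable {E P : Type*} [NormedAddCommGroup E] [NormedSpace ℝ E] [NormedAddCommGroup P]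
  [NormedSpace ℝ P]

theorem lipschitzWith_comp_prodMk_const (L : E × P →L[ℝ] E) (r : P) :
    LipschitzWith ‖L.comp (ContinuousLinearMap.inl ℝ E P)‖₊ fun θ => L (θ, r) := by
  refine LipschitzWith.of_dist_le_mul fun θ θ' => ?_
  have hsub : L (θ, r) - L (θ', r) = L.comp (ContinuousLinearMap.inl ℝ E P) (θ - θ') := by
    simp [← map_sub]
  rw [dist_eq_norm, dist_eq_norm, hsub]
  exact (L.comp _).le_opNorm _

theorem fderiv_comp_prodMk_const {g : E × P → E} (hg : Differentiable ℝ g) (θ : E) (r : P) :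
    fderiv ℝ (fun θ => g (θ, r)) θ = (fderiv ℝ g (θ, r)).comp (ContinuousLinearMap.inl ℝ E P) :=
  ((hg _).hasFDerivAt.comp θ (hasFDerivAt_prodMk_left θ r)).fderiv

theorem contDiff_shear {g : E × P → E} {n : WithTop ℕ∞} (hg : ContDiff ℝ n g) :
    ContDiff ℝ n (shear g) :=
  (contDiff_fst.sub hg).prodMk contDiff_snd

def shearFDeriv (L : E × P →L[ℝ] E) : E × P →L[ℝ] E × P :=
  (ContinuousLinearMap.fst ℝ E P - L).prod (ContinuousLinearMap.snd ℝ E P)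

theorem hasStrictFDerivAt_shear {g : E × P → E} {n : WithTop ℕ∞} (hg : ContDiff ℝ n g)
    (hn : n ≠ 0) (p : E × P) : HasStrictFDerivAt (shear g) (shearFDeriv (fderiv ℝ g p)) p :=
  (hasStrictFDerivAt_fst.sub (hg.contDiffAt.hasStrictFDerivAt hn)).prodMk hasStrictFDerivAt_snd

variable [CompleteSpace E] {K : ℝ≥0} {g : E × P → E}

theorem shearFDeriv_bijective (hK : K < 1) (hg : ∀ r, LipschitzWith K fun θ => g (θ, r))
    (hgd : Differentiable ℝ g) (p : E × P) : Bijective (shearFDeriv (fderiv ℝ g p)) := by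
  refine shear_bijective hK fun r => (lipschitzWith_comp_prodMk_const _ r).weaken ?_
  have hnorm := norm_fderiv_le_of_lipschitz ℝ (x₀ := p.1) (hg p.2)
  rw [fderiv_comp_prodMk_const hgd] at hnorm
  exact_mod_cast hnorm

theorem contDiff_shearEquiv_symm [CompleteSpace P] {n : WithTop ℕ∞} (hK : K < 1)
    (hg : ∀ r, LipschitzWith K fun θ => g (θ, r)) (hgC : ContDiff ℝ n g) (hn : n ≠ 0) :
    ContDiff ℝ n (shearEquiv hK hg).symm := by
  let Φ' p : (E × P) ≃L[ℝ] (E × P) :=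
    have hbij := shearFDeriv_bijective hK hg (hgC.differentiable hn) p
    ContinuousLinearEquiv.ofBijective (shearFDeriv (fderiv ℝ g p))
      (LinearMap.ker_eq_bot.2 hbij.1) (LinearMap.range_eq_top.2 hbij.2)
  have hΦ' p : HasStrictFDerivAt (shear g) (Φ' p : E × P →L[ℝ] E × P) p :=
    hasStrictFDerivAt_shear hgC hn p
  let Φ := (shearEquiv hK hg).toHomeomorphOfContinuousOpen (contDiff_shear hgC).continuous
    (isOpenMap_of_hasStrictFDerivAt_equiv hΦ')
  exact Φ.contDiff_symm (fun p => (hΦ' p).hasFDerivAt) (contDiff_shear hgC)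

theorem contDiff_generatedMap [CompleteSpace P] {n : WithTop ℕ∞} (hK : K < 1)
    (hg : ∀ r, LipschitzWith K fun θ => g (θ, r)) (hgC : ContDiff ℝ n g) (hhC : ContDiff ℝ n h)
    (hn : n ≠ 0) : ContDiff ℝ n (generatedMap hK hg h) :=
  (contDiff_fst.prodMk (contDiff_snd.sub hhC)).comp (contDiff_shearEquiv_symm hK hg hgC hn)

end SmoothShear

theorem Function.Periodic.fderiv {E F : Type*} [NormedAddCommGroup E] [NormedSpace ℝ E]
    [NormedAddCommGroup F] [NormedSpace ℝ F] {f : E → F} {v : E} (hf : Periodic f v) :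
    Periodic (fderiv ℝ f) v := fun x => by
  rw [← fderiv_comp_add_right]
  exact congrArg (_root_.fderiv ℝ · x) (funext hf)

theorem nnnorm_fderiv_le_of_eHolder_le {E F : Type*} [NormedAddCommGroup E] [NormedSpace ℝ E]
    [NormedAddCommGroup F] [NormedSpace ℝ F] {s : Set E} {f : E → F} {K : ℝ≥0} (hs : IsOpen s)
    (hf : eHolder 1 s f ≤ K) {x : E} (hx : x ∈ s) : ‖fderiv ℝ f x‖₊ ≤ K := by
  have h1 : (‖iteratedFDerivWithin ℝ 1 f s x‖₊ : ℝ≥0∞) ≤ eHolder 1 s f :=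
    le_sup_of_le_left (le_iSup₂_of_le 1 (by norm_num) (le_iSup₂_of_le x hx le_rfl))
  have h2 : ‖iteratedFDerivWithin ℝ 1 f s x‖₊ = ‖fderiv ℝ f x‖₊ := by
    ext
    rw [coe_nnnorm, iteratedFDerivWithin_of_isOpen 1 hs hx, norm_iteratedFDeriv_one, coe_nnnorm]
  exact_mod_cast h2 ▸ h1.trans hf

theorem nnnorm_fst_comp_comp_inl_le {E P F : Type*} [NormedAddCommGroup E] [NormedSpace ℝ E]
    [NormedAddCommGroup P] [NormedSpace ℝ P] [NormedAddCommGroup F] [NormedSpace ℝ F]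
    (A : E × P →L[ℝ] E × F) :
    ‖((ContinuousLinearMap.fst ℝ E F).comp A).comp (ContinuousLinearMap.inl ℝ E P)‖₊ ≤ ‖A‖₊ := by
  have hA : ‖((ContinuousLinearMap.fst ℝ E F).comp A).comp (ContinuousLinearMap.inl ℝ E P)‖
      ≤ ‖A‖ :=
    calc _ ≤ ‖(ContinuousLinearMap.fst ℝ E F).comp A‖ * ‖ContinuousLinearMap.inl ℝ E P‖ :=
          ContinuousLinearMap.opNorm_comp_le _ _
      _ ≤ ‖(ContinuousLinearMap.fst ℝ E F).comp A‖ :=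
          mul_le_of_le_one_right (norm_nonneg _) (ContinuousLinearMap.norm_inl_le_one _ _ _)
      _ ≤ ‖ContinuousLinearMap.fst ℝ E F‖ * ‖A‖ := ContinuousLinearMap.opNorm_comp_le _ _
      _ ≤ ‖A‖ := mul_le_of_le_one_left (norm_nonneg _) (ContinuousLinearMap.norm_fst_le _ _ _)
  exact_mod_cast hA

section Gradients

variable {d : ℕ} {G : (Fin d → ℝ) × (Fin d → ℝ) → ℝ}

theorem contDiff_gradr {m n : WithTop ℕ∞} (hG : ContDiff ℝ n G) (hmn : m + 1 ≤ n) :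
    ContDiff ℝ m (gradr G) :=
  contDiff_pi.2 fun _ => (hG.fderiv_right hmn).clm_apply contDiff_const

theorem contDiff_gradθ {m n : WithTop ℕ∞} (hG : ContDiff ℝ n G) (hmn : m + 1 ≤ n) :
    ContDiff ℝ m (gradθ G) :=
  contDiff_pi.2 fun _ => (hG.fderiv_right hmn).clm_apply contDiff_const

theorem contDiffOn_gradv {m n : WithTop ℕ∞} {K : (Fin d → ℝ) → ℝ} {D : Set (Fin d → ℝ)}
    (hD : IsOpen D) (hK : ContDiffOn ℝ n K D) (hmn : m + 1 ≤ n) : ContDiffOn ℝ m (gradv K) D := by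
  have hfderiv : ContDiffOn ℝ m (fderiv ℝ K) D :=
    (hK.fderivWithin hD.uniqueDiffOn hmn).congr fun x hx => (fderivWithin_of_isOpen hD hx).symm
  exact contDiffOn_pi.2 fun _ => hfderiv.clm_apply contDiffOn_const

theorem Function.Periodic.gradr {v : (Fin d → ℝ) × (Fin d → ℝ)} (hG : Periodic G v) :
    Periodic (gradr G) v := fun q => by
  unfold _root_.gradr
  rw [hG.fderiv q]

theorem Function.Periodic.gradθ {v : (Fin d → ℝ) × (Fin d → ℝ)} (hG : Periodic G v) :
    Periodic (gradθ G) v := fun q => by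
  unfold _root_.gradθ
  rw [hG.fderiv q]

theorem fderiv_eq_zero_of_notMem {F : Set (Fin d → ℝ)} (hF : IsClosed F)
    (hGF : ∀ θ r, r ∉ F → G (θ, r) = 0) {θ r : Fin d → ℝ} (hr : r ∉ F) : fderiv ℝ G (θ, r) = 0 := by
  have hG0 : G =ᶠ[nhds (θ, r)] fun _ => 0 := by
    filter_upwards [(hF.preimage continuous_snd).isOpen_compl.mem_nhds hr] with q hq
    exact hGF q.1 q.2 hq
  rw [hG0.fderiv_eq, fderiv_const_apply]

theorem gradr_eq_zero_of_notMem {F : Set (Fin d → ℝ)} (hF : IsClosed F)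
    (hGF : ∀ θ r, r ∉ F → G (θ, r) = 0) {θ r : Fin d → ℝ} (hr : r ∉ F) : gradr G (θ, r) = 0 := by
  ext j
  simp [gradr, fderiv_eq_zero_of_notMem hF hGF hr]

theorem gradθ_eq_zero_of_notMem {F : Set (Fin d → ℝ)} (hF : IsClosed F)
    (hGF : ∀ θ r, r ∉ F → G (θ, r) = 0) {θ r : Fin d → ℝ} (hr : r ∉ F) : gradθ G (θ, r) = 0 := by
  ext j
  simp [gradθ, fderiv_eq_zero_of_notMem hF hGF hr]

theorem lipschitzWith_gradr_fiber {D F : Set (Fin d → ℝ)} {κ : ℝ} {K : ℝ≥0} (hD : IsOpen D)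
    (hG : ContDiff ℝ 2 G) (hF : IsClosed F) (hFD : F ⊆ D) (hGF : ∀ θ r, r ∉ F → G (θ, r) = 0)
    (hκ : κ ≠ 0)
    (hsmall : eHolder 1 {p : (Fin d → ℝ) × (Fin d → ℝ) | κ • p.2 ∈ D} (sgradScaled κ G) ≤ K)
    (r : Fin d → ℝ) : LipschitzWith K fun θ => gradr G (θ, r) := by
  by_cases hr : r ∈ D
  swap
  · have hzero : (fun θ => gradr G (θ, r)) = fun _ => 0 :=
      funext fun θ => gradr_eq_zero_of_notMem hF hGF fun hrF => hr (hFD hrF)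
    rw [hzero]
    exact LipschitzWith.const' 0
  have hdiff : Differentiable ℝ (sgradScaled κ G) := by
    have hr' := (contDiff_gradr hG (m := 1) (by norm_num)).differentiable one_ne_zero
    have hθ' := (contDiff_gradθ hG (m := 1) (by norm_num)).differentiable one_ne_zero
    unfold sgradScaled
    fun_prop
  -- the `θ`-derivative of `∇_r G` at `(θ, r)` is a block of `D (sgradScaled κ G) (θ, κ⁻¹ r)`
  have hfiber : (fun θ => gradr G (θ, r)) = fun θ => (sgradScaled κ G (θ, κ⁻¹ • r)).1 := by
    funext θ
    simp [sgradScaled, smul_smul, hκ]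
  have hs : IsOpen {p : (Fin d → ℝ) × (Fin d → ℝ) | κ • p.2 ∈ D} :=
    hD.preimage (continuous_snd.const_smul κ)
  have hfst : Differentiable ℝ fun p => (sgradScaled κ G p).1 := hdiff.fst
  rw [hfiber]
  refine lipschitzWith_of_nnnorm_fderiv_le (hfst.comp (by fun_prop)) fun θ => ?_
  rw [fderiv_comp_prodMk_const hfst, fderiv.fst (hdiff _)]
  exact (nnnorm_fst_comp_comp_inl_le _).trans
    (nnnorm_fderiv_le_of_eHolder_le hs hsmall (by simpa [smul_smul, hκ]))

end Gradients

theorem factorization_of_generated_map_general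
    (d : ℕ) (hd : 1 ≤ d) (D : Set (Fin d → ℝ)) (hD : IsOpen D)
    (K : (Fin d → ℝ) → ℝ) (hK : ContDiffOn ℝ (⊤ : ℕ∞) K D)
    (G : (Fin d → ℝ) × (Fin d → ℝ) → ℝ) (hG : ContDiff ℝ (⊤ : ℕ∞) G)
    (hGper : ∀ θ r (l : Fin d → ℤ), G (θ + (fun j => 2 * π * (l j : ℝ)), r) = G (θ, r))
    (F : Set (Fin d → ℝ)) (hF : IsCompact F) (hFD : F ⊆ D)
    (hGsupp : ∀ θ r, r ∉ F → G (θ, r) = 0)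
    (κ ε₀ : ℝ) (hκ0 : 0 < κ) (hε₀1 : ε₀ < 1)
    (hsmall : ((2 * d : ℕ) : ℝ≥0∞) *
        eHolder 1 {p : (Fin d → ℝ) × (Fin d → ℝ) | κ • p.2 ∈ D} (sgradScaled κ G)
      ≤ ENNReal.ofReal ε₀) :
    ∃ W P : (Fin d → ℝ) × (Fin d → ℝ) → (Fin d → ℝ) × (Fin d → ℝ),
      -- (a) the map generated by ⟨θ,r⟩ - G :
      (∀ r ∈ D, Function.Bijective (fun θ : Fin d → ℝ => θ - gradr G (θ, r))) ∧
      ContDiffOn ℝ (⊤ : ℕ∞) W (univ ×ˢ D) ∧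
      (∀ θ r (l : Fin d → ℤ), r ∈ D →
          W (θ + (fun j => 2 * π * (l j : ℝ)), r)
            = ((W (θ, r)).1 + (fun j => 2 * π * (l j : ℝ)), (W (θ, r)).2)) ∧
      (∀ θ, ∀ r ∈ D, W (θ - gradr G (θ, r), r) = (θ, r - gradθ G (θ, r))) ∧
      (∀ θ, ∀ r ∈ D, r ∉ F → W (θ, r) = (θ, r)) ∧
      -- uniqueness of `W` on `𝕋^d × D`
      (∀ W' : (Fin d → ℝ) × (Fin d → ℝ) → (Fin d → ℝ) × (Fin d → ℝ),
          (∀ θ, ∀ r ∈ D, W' (θ - gradr G (θ, r), r) = (θ, r - gradθ G (θ, r))) →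
          ∀ θ, ∀ r ∈ D, W' (θ, r) = W (θ, r)) ∧
      -- (b) the map generated by ⟨θ,r⟩ - K(r) - G :
      (∀ r ∈ D, Function.Bijective
          (fun θ : Fin d → ℝ => θ - gradv K r - gradr G (θ, r))) ∧
      ContDiffOn ℝ (⊤ : ℕ∞) P (univ ×ˢ D) ∧
      (∀ θ, ∀ r ∈ D,
          P (θ - gradv K r - gradr G (θ, r), r) = (θ, r - gradθ G (θ, r))) ∧
      -- (c) `P = W ∘ Q` with `Q(θ,r) = (θ + ∇K(r), r)` :
      (∀ θ, ∀ r ∈ D, P (θ, r) = W (θ + gradv K r, r)) := by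
  have hK1 : ε₀.toNNReal < 1 := Real.toNNReal_lt_one.2 hε₀1
  have hsmall' : eHolder 1 {p : (Fin d → ℝ) × (Fin d → ℝ) | κ • p.2 ∈ D} (sgradScaled κ G)
      ≤ ε₀.toNNReal :=
    (le_mul_of_one_le_left' (by exact_mod_cast (by omega : 1 ≤ 2 * d))).trans hsmall
  have hlip := lipschitzWith_gradr_fiber hD (hG.of_le (WithTop.coe_le_coe.2 le_top)) hF.isClosed hFD
    hGsupp hκ0.ne' hsmall'
  set W := generatedMap hK1 hlip (gradθ G)
  have hWsmooth : ContDiff ℝ (⊤ : ℕ∞) W :=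
    contDiff_generatedMap hK1 hlip (contDiff_gradr hG (by simp)) (contDiff_gradθ hG (by simp))
      (by simp)
  have hfiber r : Function.Bijective fun θ => θ - gradr G (θ, r) :=
    ContractingWith.bijective_sub ⟨hK1, hlip r⟩
  refine ⟨W, fun p => W (p.1 + gradv K p.2, p.2), fun r _ => hfiber r, hWsmooth.contDiffOn,
    fun θ r l _ => ?_, fun θ r _ => generatedMap_shear hK1 hlip (θ, r), fun θ r _ hr => ?_,
    fun W' hW' θ r hr => eq_generatedMap_of_shear hK1 hlip hW' hr, fun r _ => ?_, ?_,
    fun θ r _ => ?_, fun _ _ _ => rfl⟩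
  · have hper : Periodic G ((fun j => 2 * π * (l j : ℝ)), 0) := fun q => by
      simpa [Prod.add_def] using hGper q.1 q.2 l
    simpa [Prod.add_def] using generatedMap_add hK1 hlip hper.gradr hper.gradθ (θ, r)
  · exact generatedMap_apply_of_eq_zero hK1 hlip (gradr_eq_zero_of_notMem hF.isClosed hGsupp hr)
      (gradθ_eq_zero_of_notMem hF.isClosed hGsupp hr)
  · have hcomp : (fun θ => θ - gradv K r - gradr G (θ, r))
        = (· - gradv K r) ∘ fun θ => θ - gradr G (θ, r) :=
      funext fun θ => sub_right_comm _ _ _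
    exact hcomp ▸ (Equiv.subRight _).bijective.comp (hfiber r)
  · exact hWsmooth.comp_contDiffOn ((contDiffOn_fst.add ((contDiffOn_gradv hD hK (by simp)).comp
      contDiffOn_snd fun p hp => hp.2)).prodMk contDiffOn_snd)
  · show W (_, r) = _
    rw [sub_right_comm, sub_add_cancel]
    exact generatedMap_shear hK1 hlip (θ, r)

/-- **Lemma A.16 (factorization of a generated near-integrable map).**
If `G` is supported in `𝕋^d × F`, `F ⊂ D` compact, with
`2d‖σ_κ⁻¹ sgrad G‖_{1,𝔸;κ} ≤ ε₀ < 1` and `‖∇_θ G‖_{C⁰} < dist(F, ℝ^d ∖ D)`, then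
`⟨θ,r⟩ - G` generates a map `W` of `𝕋^d × D` equal to the identity outside `𝕋^d × F`,
`⟨θ,r⟩ - K(r) - G` generates a map `P` of `𝕋^d × D`, and `P = W ∘ Q` with
`Q(θ,r) = (θ + ∇K(r), r)`. -/
theorem factorization_of_generated_map
    (d : ℕ) (hd : 1 ≤ d) (D : Set (Fin d → ℝ)) (hD : IsOpen D)
    (K : (Fin d → ℝ) → ℝ) (hK : ContDiffOn ℝ (⊤ : ℕ∞) K D)
    (G : (Fin d → ℝ) × (Fin d → ℝ) → ℝ) (hG : ContDiff ℝ (⊤ : ℕ∞) G)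
    (hGper : ∀ θ r (l : Fin d → ℤ), G (θ + (fun j => 2 * π * (l j : ℝ)), r) = G (θ, r))
    (F : Set (Fin d → ℝ)) (hF : IsCompact F) (hFD : F ⊆ D)
    (hGsupp : ∀ θ r, r ∉ F → G (θ, r) = 0)
    (κ ε₀ : ℝ) (hκ0 : 0 < κ) (hκ1 : κ ≤ 1) (hε₀0 : 0 < ε₀) (hε₀1 : ε₀ < 1)
    (hsmall : ((2 * d : ℕ) : ℝ≥0∞) *
        eHolder 1 {p : (Fin d → ℝ) × (Fin d → ℝ) | κ • p.2 ∈ D} (sgradScaled κ G)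
      ≤ ENNReal.ofReal ε₀)
    (hsep : ∃ b : ℝ, 0 ≤ b ∧ (∀ p, ‖gradθ G p‖ ≤ b) ∧
        ∀ x ∈ F, ∀ y, y ∉ D → b < dist x y) :
    ∃ W P : (Fin d → ℝ) × (Fin d → ℝ) → (Fin d → ℝ) × (Fin d → ℝ),
      -- (a) the map generated by ⟨θ,r⟩ - G :
      (∀ r ∈ D, Function.Bijective (fun θ : Fin d → ℝ => θ - gradr G (θ, r))) ∧
      ContDiffOn ℝ (⊤ : ℕ∞) W (univ ×ˢ D) ∧
      (∀ θ r (l : Fin d → ℤ), r ∈ D →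
          W (θ + (fun j => 2 * π * (l j : ℝ)), r)
            = ((W (θ, r)).1 + (fun j => 2 * π * (l j : ℝ)), (W (θ, r)).2)) ∧
      (∀ θ, ∀ r ∈ D, W (θ - gradr G (θ, r), r) = (θ, r - gradθ G (θ, r))) ∧
      (∀ θ, ∀ r ∈ D, r ∉ F → W (θ, r) = (θ, r)) ∧
      -- uniqueness of `W` on `𝕋^d × D`
      (∀ W' : (Fin d → ℝ) × (Fin d → ℝ) → (Fin d → ℝ) × (Fin d → ℝ),
          (∀ θ, ∀ r ∈ D, W' (θ - gradr G (θ, r), r) = (θ, r - gradθ G (θ, r))) →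
          ∀ θ, ∀ r ∈ D, W' (θ, r) = W (θ, r)) ∧
      -- (b) the map generated by ⟨θ,r⟩ - K(r) - G :
      (∀ r ∈ D, Function.Bijective
          (fun θ : Fin d → ℝ => θ - gradv K r - gradr G (θ, r))) ∧
      ContDiffOn ℝ (⊤ : ℕ∞) P (univ ×ˢ D) ∧
      (∀ θ, ∀ r ∈ D,
          P (θ - gradv K r - gradr G (θ, r), r) = (θ, r - gradθ G (θ, r))) ∧
      -- (c) `P = W ∘ Q` with `Q(θ,r) = (θ + ∇K(r), r)` :
      (∀ θ, ∀ r ∈ D, P (θ, r) = W (θ + gradv K r, r)) :=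
  factorization_of_generated_map_general d hd D hD K hK G hG hGper F hF hFD hGsupp κ ε₀ hκ0 hε₀1
    hsmall
end
end
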